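/- For an iid source with marginal P₁ on a finite set X, for every sequence of PMFs (P_{Y^n}) on X^n there exists a single-letter PMF Q on X (a limit point of the Cesàro averages of the marginals of P_{Y^n}) such that limsup_n (1/n) D(P_{Y^n}‖P₁^{⊗n}) ≥ D(Q‖P₁) and liminf_n (1/n) H(P_{Y^n}) ≤ H(Q). -/

import Mathlib

/-!
Let `Z_n` be the average of the single-letter marginals of `P_{Y^n}`. Gibbs' inequality against
the product of the marginals gives `H(P_{Y^n}) ≤ ∑ᵢ H(P_{Y_i})`, and concavity of `x ↦ -x log x`
gives `∑ᵢ H(P_{Y_i}) ≤ n H(Z_n)`. Since `log P₁^{⊗n}` is additive, the cross term of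
`D(P_{Y^n}‖P₁^{⊗n})` is `n` times that of `D(Z_n‖P₁)`, so also `n D(Z_n‖P₁) ≤ D(P_{Y^n}‖P₁^{⊗n})`.
The `Z_n` lie in the compact simplex; along a convergent subsequence `Z_n → Q`, continuity of
`H` and of `D(·‖P₁)` carries both bounds to `Q`.
-/

open Filter Real Topology

section Pushforward

variable {X Y : Type*} [Fintype X] [Fintype Y]

theorem FunOnFinite.sum_map_mul (f : X → Y) (s : X → ℝ) (g : Y → ℝ) :
    ∑ y, FunOnFinite.map f s y * g y = ∑ x, s x * g (f x) := by
  classical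
  simp_rw [FunOnFinite.map_apply_apply, Finset.sum_mul]
  rw [← Finset.sum_fiberwise Finset.univ f]
  refine Finset.sum_congr rfl fun y _ => Finset.sum_congr rfl fun x hx => ?_
  rw [(Finset.mem_filter.1 hx).2]

theorem FunOnFinite.le_map_apply {f : X → Y} {s : X → ℝ} (hs : ∀ x, 0 ≤ s x) (x : X) :
    s x ≤ FunOnFinite.map f s (f x) := by
  classical
  rw [FunOnFinite.map_apply_apply]
  exact Finset.single_le_sum (fun x' _ => hs x') (by simp)

theorem FunOnFinite.map_mem_stdSimplex (f : X → Y) {s : X → ℝ} (hs : s ∈ stdSimplex ℝ X) :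
    FunOnFinite.map f s ∈ stdSimplex ℝ Y := by
  refine ⟨fun y => ?_, ?_⟩
  · classical
    rw [FunOnFinite.map_apply_apply]
    exact Finset.sum_nonneg fun x _ => hs.1 x
  · simpa [hs.2] using FunOnFinite.sum_map_mul f s 1

end Pushforward

theorem sub_le_mul_log_div {p q : ℝ} (hp : 0 ≤ p) (hq : 0 ≤ q) (hpq : p ≠ 0 → q ≠ 0) :
    p - q ≤ p * log (p / q) := by
  rcases hp.eq_or_lt with rfl | hp
  · simpa using hq
  have hq : 0 < q := hq.lt_of_ne' (hpq hp.ne')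
  have := one_sub_inv_le_log_of_pos (div_pos hp hq)
  calc p - q = p * (1 - (p / q)⁻¹) := by field_simp
    _ ≤ p * log (p / q) := by gcongr

section Entropy

variable {α : Type*} [Fintype α]

noncomputable def entropy (p : α → ℝ) : ℝ := ∑ a, negMulLog (p a)

noncomputable def relEntropy (p q : α → ℝ) : ℝ := ∑ a, p a * log (p a / q a)

theorem entropy_eq_sum_neg_mul_log (p : α → ℝ) : entropy p = ∑ a, -(p a * log (p a)) := by
  simp only [entropy, negMulLog, neg_mul]

theorem entropy_nonneg {p : α → ℝ} (hp : p ∈ stdSimplex ℝ α) : 0 ≤ entropy p :=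
  Finset.sum_nonneg fun a _ =>
    negMulLog_nonneg (mem_Icc_of_mem_stdSimplex hp a).1 (mem_Icc_of_mem_stdSimplex hp a).2

theorem continuous_entropy : Continuous (entropy : (α → ℝ) → ℝ) :=
  continuous_finsetSum _ fun a _ => continuous_negMulLog.comp (continuous_apply a)

theorem relEntropy_nonneg {p q : α → ℝ} (hp : ∀ a, 0 ≤ p a) (hq : ∀ a, 0 ≤ q a)
    (hpq : ∀ a, p a ≠ 0 → q a ≠ 0) (hsum : ∑ a, q a ≤ ∑ a, p a) : 0 ≤ relEntropy p q := by
  calc 0 ≤ ∑ a, (p a - q a) := by rw [Finset.sum_sub_distrib]; linarith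
    _ ≤ relEntropy p q :=
      Finset.sum_le_sum fun a _ => sub_le_mul_log_div (hp a) (hq a) (hpq a)

theorem relEntropy_eq_neg_entropy_sub {p q : α → ℝ} (hpq : ∀ a, p a ≠ 0 → q a ≠ 0) :
    relEntropy p q = -entropy p - ∑ a, p a * log (q a) := by
  rw [entropy_eq_sum_neg_mul_log, Finset.sum_neg_distrib, neg_neg, ← Finset.sum_sub_distrib]
  refine Finset.sum_congr rfl fun a _ => ?_
  by_cases ha : p a = 0
  · simp [ha]
  · rw [log_div ha (hpq a ha), mul_sub]

theorem continuous_relEntropy {q : α → ℝ} (hq : ∀ a, 0 < q a) :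
    Continuous fun p => relEntropy p q := by
  have : (fun p => relEntropy p q) = fun p => -entropy p - ∑ a, p a * log (q a) :=
    funext fun p => relEntropy_eq_neg_entropy_sub fun a _ => (hq a).ne'
  rw [this]
  exact continuous_entropy.neg.sub
    (continuous_finsetSum _ fun a _ => (continuous_apply a).mul continuous_const)

end Entropy

section Marginal

variable {ι X : Type*} [Fintype ι] [Fintype X]

noncomputable def marginal (p : (ι → X) → ℝ) (i : ι) : X → ℝ :=
  FunOnFinite.map (fun x => x i) p

noncomputable def avgMarginal (p : (ι → X) → ℝ) : X → ℝ :=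
  ∑ i, (Fintype.card ι : ℝ)⁻¹ • marginal p i

variable {p : (ι → X) → ℝ}

theorem avgMarginal_mem_stdSimplex [DecidableEq ι] [Nonempty ι]
    (hp : p ∈ stdSimplex ℝ (ι → X)) :
    avgMarginal p ∈ stdSimplex ℝ X :=
  (convex_stdSimplex ℝ X).sum_mem (fun _ _ => by positivity) (by simp)
    fun _ _ => FunOnFinite.map_mem_stdSimplex _ hp

theorem card_mul_avgMarginal_apply [Nonempty ι] (a : X) :
    Fintype.card ι * avgMarginal p a = ∑ i, marginal p i a := by
  simp [avgMarginal, Finset.sum_apply, ← Finset.mul_sum]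

theorem sum_mul_log_prod [DecidableEq ι] {r : ι → X → ℝ}
    (hr : ∀ x, p x ≠ 0 → ∀ i, r i (x i) ≠ 0) :
    ∑ x, p x * log (∏ i, r i (x i)) = ∑ i, ∑ a, marginal p i a * log (r i a) := by
  calc ∑ x, p x * log (∏ i, r i (x i)) = ∑ x, ∑ i, p x * log (r i (x i)) := by
        refine Finset.sum_congr rfl fun x _ => ?_
        by_cases hx : p x = 0
        · simp [hx]
        · rw [log_prod fun i _ => hr x hx i, Finset.mul_sum]
    _ = ∑ i, ∑ x, p x * log (r i (x i)) := Finset.sum_comm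
    _ = ∑ i, ∑ a, marginal p i a * log (r i a) :=
        Finset.sum_congr rfl fun i _ =>
          (FunOnFinite.sum_map_mul (fun x => x i) p fun a => log (r i a)).symm

theorem entropy_le_sum_entropy_marginal [DecidableEq ι] (hp : p ∈ stdSimplex ℝ (ι → X)) :
    entropy p ≤ ∑ i, entropy (marginal p i) := by
  have hmarg : ∀ i, marginal p i ∈ stdSimplex ℝ X := fun i => FunOnFinite.map_mem_stdSimplex _ hp
  have hpos : ∀ x, p x ≠ 0 → ∀ i, marginal p i (x i) ≠ 0 := fun x hx i =>
    (((hp.1 x).lt_of_ne' hx).trans_le (FunOnFinite.le_map_apply hp.1 x)).ne'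
  have hprod : ∀ x, p x ≠ 0 → ∏ i, marginal p i (x i) ≠ 0 := fun x hx =>
    Finset.prod_ne_zero_iff.2 fun i _ => hpos x hx i
  have hsum : ∑ x : ι → X, ∏ i, marginal p i (x i) = 1 := by
    rw [← Fintype.piFinset_univ, ← Finset.prod_univ_sum]
    simp [(hmarg _).2]
  have hgibbs := relEntropy_nonneg hp.1 (fun x => Finset.prod_nonneg fun i _ => (hmarg i).1 _)
    hprod (by rw [hsum, hp.2])
  rw [relEntropy_eq_neg_entropy_sub hprod, sum_mul_log_prod hpos] at hgibbs
  simp only [entropy_eq_sum_neg_mul_log, Finset.sum_neg_distrib] at hgibbs ⊢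
  linarith

theorem sum_entropy_marginal_le [DecidableEq ι] [Nonempty ι]
    (hp : p ∈ stdSimplex ℝ (ι → X)) :
    ∑ i, entropy (marginal p i) ≤ Fintype.card ι * entropy (avgMarginal p) := by
  have hcard : (0 : ℝ) < Fintype.card ι := by positivity
  have hjensen : ∀ a, ∑ i, (Fintype.card ι : ℝ)⁻¹ • negMulLog (marginal p i a)
      ≤ negMulLog (avgMarginal p a) := fun a => by
    have := concaveOn_negMulLog.le_map_sum (t := Finset.univ)
      (w := fun _ => (Fintype.card ι : ℝ)⁻¹) (p := fun i => marginal p i a)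
      (fun _ _ => by positivity) (by simp) fun i _ => (FunOnFinite.map_mem_stdSimplex _ hp).1 a
    simpa [avgMarginal, Finset.sum_apply] using this
  calc ∑ i, entropy (marginal p i)
      = Fintype.card ι * ∑ a, ∑ i, (Fintype.card ι : ℝ)⁻¹ • negMulLog (marginal p i a) := by
        simp only [entropy, smul_eq_mul, ← Finset.mul_sum]
        rw [Finset.sum_comm, ← mul_assoc, mul_inv_cancel₀ hcard.ne', one_mul]
    _ ≤ Fintype.card ι * entropy (avgMarginal p) := by
        unfold entropy
        gcongr with a
        exact hjensen a

theorem entropy_le_card_mul_entropy_avgMarginal [DecidableEq ι] [Nonempty ι]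
    (hp : p ∈ stdSimplex ℝ (ι → X)) :
    entropy p ≤ Fintype.card ι * entropy (avgMarginal p) :=
  (entropy_le_sum_entropy_marginal hp).trans (sum_entropy_marginal_le hp)

theorem relEntropy_pi_eq [DecidableEq ι] [Nonempty ι] {r : X → ℝ} (hr : ∀ a, 0 < r a) :
    relEntropy p (fun x => ∏ i, r (x i))
      = -entropy p - Fintype.card ι * ∑ a, avgMarginal p a * log (r a) := by
  rw [relEntropy_eq_neg_entropy_sub fun x _ => Finset.prod_ne_zero_iff.2 fun i _ => (hr _).ne',
    sum_mul_log_prod (r := fun _ => r) fun x _ i => (hr _).ne', Finset.sum_comm, Finset.mul_sum]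
  congr 1
  refine Finset.sum_congr rfl fun a _ => ?_
  rw [← Finset.sum_mul, ← card_mul_avgMarginal_apply, mul_assoc]

theorem card_mul_relEntropy_avgMarginal_le [DecidableEq ι] [Nonempty ι]
    (hp : p ∈ stdSimplex ℝ (ι → X)) {r : X → ℝ} (hr : ∀ a, 0 < r a) :
    Fintype.card ι * relEntropy (avgMarginal p) r ≤ relEntropy p (fun x => ∏ i, r (x i)) := by
  rw [relEntropy_pi_eq hr, relEntropy_eq_neg_entropy_sub fun a _ => (hr a).ne']
  linarith [entropy_le_card_mul_entropy_avgMarginal hp]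

theorem relEntropy_pi_le [DecidableEq ι] [Nonempty ι]
    (hp : p ∈ stdSimplex ℝ (ι → X)) {r : X → ℝ} (hr : ∀ a, 0 < r a) :
    relEntropy p (fun x => ∏ i, r (x i)) ≤ Fintype.card ι * ∑ a, |log (r a)| := by
  have hcross : -∑ a, avgMarginal p a * log (r a) ≤ ∑ a, |log (r a)| := by
    rw [← Finset.sum_neg_distrib]
    refine Finset.sum_le_sum fun a _ => ?_
    obtain ⟨h0, h1⟩ := mem_Icc_of_mem_stdSimplex (avgMarginal_mem_stdSimplex hp) a
    calc -(avgMarginal p a * log (r a)) ≤ |avgMarginal p a * log (r a)| := neg_le_abs _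
      _ = avgMarginal p a * |log (r a)| := by rw [abs_mul, abs_of_nonneg h0]
      _ ≤ |log (r a)| := mul_le_of_le_one_left (abs_nonneg _) h1
  have hcard : (0 : ℝ) ≤ Fintype.card ι := by positivity
  rw [relEntropy_pi_eq hr]
  linarith [entropy_nonneg hp, mul_le_mul_of_nonneg_left hcross hcard]

end Marginal

theorem le_limsup_of_tendsto_of_le_comp {α β : Type*} {f : Filter α} {g : Filter β} [g.NeBot]
    {F : α → ℝ} {σ : β → α} {u : β → ℝ} {L : ℝ} (hσ : Tendsto σ g f) (hu : Tendsto u g (𝓝 L))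
    (hle : ∀ᶠ k in g, u k ≤ F (σ k)) (hF : IsBoundedUnder (· ≤ ·) f F) : L ≤ limsup F f := by
  refine le_of_forall_lt_imp_le_of_dense fun c hc => le_limsup_of_frequently_le ?_ hF
  refine hσ.frequently (Eventually.frequently ?_)
  filter_upwards [hu.eventually (lt_mem_nhds hc), hle] with k hck hk
  exact hck.le.trans hk

theorem liminf_le_of_tendsto_of_comp_le {α β : Type*} {f : Filter α} {g : Filter β} [g.NeBot]
    {G : α → ℝ} {σ : β → α} {v : β → ℝ} {M : ℝ} (hσ : Tendsto σ g f) (hv : Tendsto v g (𝓝 M))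
    (hle : ∀ᶠ k in g, G (σ k) ≤ v k) (hG : IsBoundedUnder (· ≥ ·) f G) : liminf G f ≤ M := by
  refine le_of_forall_gt_imp_ge_of_dense fun c hc => liminf_le_of_frequently_le ?_ hG
  refine hσ.frequently (Eventually.frequently ?_)
  filter_upwards [hv.eventually (gt_mem_nhds hc), hle] with k hck hk
  exact hk.trans hck.le

theorem isBoundedUnder_le_relEntropy_pi_div {X : Type*} [Fintype X]
    {P : ∀ n : ℕ, (Fin n → X) → ℝ} (hP : ∀ n, P n ∈ stdSimplex ℝ (Fin n → X))
    {r : X → ℝ} (hr : ∀ a, 0 < r a) :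
    IsBoundedUnder (· ≤ ·) atTop
      fun n : ℕ => 1 / (n : ℝ) * relEntropy (P n) fun x => ∏ i, r (x i) := by
  refine isBoundedUnder_of_eventually_le (a := ∑ a, |log (r a)|) ?_
  filter_upwards [eventually_ge_atTop 1] with n hn
  obtain ⟨m, rfl⟩ := Nat.exists_eq_add_of_le' hn
  have := relEntropy_pi_le (hP (m + 1)) hr
  rw [Fintype.card_fin] at this
  rwa [one_div_mul_eq_div, div_le_iff₀' (by positivity)]

theorem stmt18_general {X : Type*} [Fintype X]
    (P₁ : X → ℝ) (hP0 : ∀ x, 0 < P₁ x)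
    (PY : ∀ n : ℕ, (Fin n → X) → ℝ)
    (hY0 : ∀ n x, 0 ≤ PY n x) (hY1 : ∀ n, ∑ x : Fin n → X, PY n x = 1) :
    ∃ Q : X → ℝ, (∀ x, 0 ≤ Q x) ∧ (∑ x : X, Q x = 1) ∧
      (∑ x : X, Q x * Real.log (Q x / P₁ x) ≤
        limsup (fun n : ℕ => (1 / (n : ℝ)) *
          ∑ x : Fin n → X, PY n x * Real.log (PY n x / ∏ i, P₁ (x i))) atTop) ∧
      (liminf (fun n : ℕ => (1 / (n : ℝ)) *
          ∑ x : Fin n → X, -(PY n x * Real.log (PY n x))) atTop ≤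
        ∑ x : X, -(Q x * Real.log (Q x))) := by
  have hPY : ∀ n, PY n ∈ stdSimplex ℝ (Fin n → X) := fun n => ⟨hY0 n, hY1 n⟩
  -- the shift avoids `n = 0`, where `avgMarginal` is `0` rather than a distribution
  obtain ⟨Q, hQ, φ, hφ, hZQ⟩ := (isCompact_stdSimplex ℝ X).tendsto_subseq
    fun n => avgMarginal_mem_stdSimplex (hPY (n + 1))
  have hσ : Tendsto (fun k => φ k + 1) atTop atTop :=
    (tendsto_add_atTop_nat 1).comp hφ.tendsto_atTop
  refine ⟨Q, hQ.1, hQ.2, ?_, ?_⟩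
  · change relEntropy Q P₁ ≤ limsup (fun n : ℕ =>
      1 / (n : ℝ) * relEntropy (PY n) fun x => ∏ i, P₁ (x i)) atTop
    refine le_limsup_of_tendsto_of_le_comp hσ (((continuous_relEntropy hP0).tendsto Q).comp hZQ)
      (Eventually.of_forall fun k => ?_) ?_
    · have := card_mul_relEntropy_avgMarginal_le (hPY (φ k + 1)) hP0
      rw [Fintype.card_fin] at this
      dsimp only [Function.comp_apply]
      rwa [one_div_mul_eq_div, le_div_iff₀' (by positivity)]
    · exact isBoundedUnder_le_relEntropy_pi_div hPY hP0
  · simp only [← entropy_eq_sum_neg_mul_log]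
    refine liminf_le_of_tendsto_of_comp_le hσ ((continuous_entropy.tendsto Q).comp hZQ)
      (Eventually.of_forall fun k => ?_) ?_
    · have := entropy_le_card_mul_entropy_avgMarginal (hPY (φ k + 1))
      rw [Fintype.card_fin] at this
      dsimp only [Function.comp_apply]
      rwa [one_div_mul_eq_div, div_le_iff₀' (by positivity)]
    · exact isBoundedUnder_of ⟨0, fun n => mul_nonneg (by positivity) (entropy_nonneg (hPY n))⟩

/-- For an iid source with full-support marginal `P₁` on a finite set `X` and
any sequence of PMFs `(P_{Y^n})` on `X^n`, there exists a single-letter PMF `Q`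
on `X` (a limit point of the Cesàro averages of the marginals of `P_{Y^n}`)
such that
`limsup_n (1/n) D(P_{Y^n}‖P₁^{⊗n}) ≥ D(Q‖P₁)` and
`liminf_n (1/n) H(P_{Y^n}) ≤ H(Q)`. -/
theorem stmt18 {X : Type*} [Fintype X] [Nonempty X]
    (P₁ : X → ℝ) (hP0 : ∀ x, 0 < P₁ x) (hP1 : ∑ x : X, P₁ x = 1)
    (PY : ∀ n : ℕ, (Fin n → X) → ℝ)
    (hY0 : ∀ n x, 0 ≤ PY n x) (hY1 : ∀ n, ∑ x : Fin n → X, PY n x = 1) :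
    ∃ Q : X → ℝ, (∀ x, 0 ≤ Q x) ∧ (∑ x : X, Q x = 1) ∧
      (∑ x : X, Q x * Real.log (Q x / P₁ x) ≤
        limsup (fun n : ℕ => (1 / (n : ℝ)) *
          ∑ x : Fin n → X, PY n x * Real.log (PY n x / ∏ i, P₁ (x i))) atTop) ∧
      (liminf (fun n : ℕ => (1 / (n : ℝ)) *
          ∑ x : Fin n → X, -(PY n x * Real.log (PY n x))) atTop ≤
        ∑ x : X, -(Q x * Real.log (Q x))) :=
  stmt18_general P₁ hP0 PY hY0 hY1
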